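/- arXiv:1303.7293 — 2 statements merged into one kernel-verified Lean document; each statement's English description precedes it below -/
import Mathlib

section
/- Let R be a commutative noetherian ring, I, I', J ideals of R, M a finitely generated R-module, and N an R-module. Then Γ_{I,J}(Γ_{I',J}(M,N)) = Γ_{I+I',J}(M,N), where Γ_{I,J} applied to the submodule Γ_{I',J}(M,N) of Hom_R(M,N) means its (I,J)-torsion submodule. -/
open CategoryTheory

section GammaDefs

variable {R : Type} [CommRing R]

lemma gammaIJ_aux {M : Type} [AddCommGroup M] [Module R M] (I J : Ideal R) (x : M) (n : ℕ) :
    (∀ a ∈ I ^ n, ∃ j ∈ J, a • x = j • x) ↔ I ^ n ≤ Ideal.torsionOf R M x ⊔ J := by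
  constructor
  · intro h a ha
    obtain ⟨j, hj, hja⟩ := h a ha
    exact Submodule.mem_sup.2 ⟨a - j, by simp [Ideal.mem_torsionOf_iff, sub_smul, hja],
      j, hj, by ring⟩
  · intro h a ha
    obtain ⟨s, hs, j, hj, hsj⟩ := Submodule.mem_sup.1 (h ha)
    refine ⟨j, hj, ?_⟩
    rw [← hsj, add_smul, (Ideal.mem_torsionOf_iff _ _).1 hs, zero_add]

/-- The `(I,J)`-torsion submodule: elements `x` such that `I^n x ⊆ J x` for some `n > 0`. -/
def gammaIJ (I J : Ideal R) (M : Type) [AddCommGroup M] [Module R M] : Submodule R M where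
  carrier := {x | ∃ n : ℕ, 0 < n ∧ ∀ a ∈ I ^ n, ∃ j ∈ J, a • x = j • x}
  zero_mem' := ⟨1, one_pos, fun a _ => ⟨0, J.zero_mem, by simp⟩⟩
  add_mem' := by
    rintro x y ⟨n, hn, hx⟩ ⟨m, hm, hy⟩
    refine ⟨n + m, by omega, (gammaIJ_aux I J _ _).2 ?_⟩
    rw [pow_add]
    refine le_trans (Ideal.mul_mono ((gammaIJ_aux I J _ _).1 hx) ((gammaIJ_aux I J _ _).1 hy))
      (Ideal.mul_le.2 ?_)
    rintro a ha b hb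
    obtain ⟨s, hs, j, hj, rfl⟩ := Submodule.mem_sup.1 ha
    obtain ⟨t, ht, j', hj', rfl⟩ := Submodule.mem_sup.1 hb
    rw [Ideal.mem_torsionOf_iff] at hs ht
    refine Submodule.mem_sup.2 ⟨s * t, ?_, s * j' + j * t + j * j',
      J.add_mem (J.add_mem (J.mul_mem_left s hj') (J.mul_mem_right t hj)) (J.mul_mem_left j hj'),
      by ring⟩
    have h1 : (s * t) • x = 0 := by rw [mul_comm, mul_smul, hs, smul_zero]
    have h2 : (s * t) • y = 0 := by rw [mul_smul, ht, smul_zero]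
    rw [Ideal.mem_torsionOf_iff, smul_add, h1, h2, add_zero]
  smul_mem' := by
    rintro r x ⟨n, hn, hx⟩
    refine ⟨n, hn, fun a ha => ?_⟩
    obtain ⟨j, hj, hja⟩ := hx a ha
    exact ⟨j, hj, by rw [smul_comm, hja, smul_comm]⟩

/-- The `I`-torsion submodule: elements killed by a power of `I`. -/
def gammaI (I : Ideal R) (M : Type) [AddCommGroup M] [Module R M] : Submodule R M where
  carrier := {x | ∃ n : ℕ, 0 < n ∧ ∀ a ∈ I ^ n, a • x = 0}
  zero_mem' := ⟨1, one_pos, fun a _ => smul_zero a⟩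
  add_mem' := by
    rintro x y ⟨n, hn, hx⟩ ⟨m, hm, hy⟩
    refine ⟨n + m, by omega, fun a ha => ?_⟩
    rw [smul_add, hx a (Ideal.pow_le_pow_right (by omega) ha),
      hy a (Ideal.pow_le_pow_right (by omega) ha), add_zero]
  smul_mem' := by
    rintro r x ⟨n, hn, hx⟩
    exact ⟨n, hn, fun a ha => by rw [smul_comm, hx a ha, smul_zero]⟩

end GammaDefs




lemma torsionOf_subtype {R M : Type} [CommRing R] [AddCommGroup M] [Module R M]
    (S : Submodule R M) (x : ↥S) :
    Ideal.torsionOf R (↥S) x = Ideal.torsionOf R M (x : M) := by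
  ext a
  simp only [Ideal.mem_torsionOf_iff, Subtype.ext_iff, Submodule.coe_smul,
    ZeroMemClass.coe_zero]

lemma mem_gammaIJ_iff {R M : Type} [CommRing R] [AddCommGroup M] [Module R M]
    (I J : Ideal R) (x : M) :
    x ∈ gammaIJ I J M ↔ ∃ n : ℕ, 0 < n ∧ I ^ n ≤ Ideal.torsionOf R M x ⊔ J := by
  constructor
  · rintro ⟨n, hn, h⟩; exact ⟨n, hn, (gammaIJ_aux I J x n).1 h⟩
  · rintro ⟨n, hn, h⟩; exact ⟨n, hn, (gammaIJ_aux I J x n).2 h⟩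

/-- Proposition 2.4 (iv): `Γ_{I,J}(Γ_{I',J}(M,N)) = Γ_{I+I',J}(M,N)`. -/
theorem gammaIJ_gammaIJ_sup (R : Type) [CommRing R] [IsNoetherianRing R]
    (I I' J : Ideal R) (M N : Type) [AddCommGroup M] [Module R M] [Module.Finite R M]
    [AddCommGroup N] [Module R N] :
    (gammaIJ I J ↥(gammaIJ I' J (M →ₗ[R] N))).map (gammaIJ I' J (M →ₗ[R] N)).subtype =
      gammaIJ (I + I') J (M →ₗ[R] N) := by
  ext f
  simp only [Submodule.mem_map, Submodule.coe_subtype]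
  constructor
  · rintro ⟨x, hx, rfl⟩
    obtain ⟨n, hn, h1⟩ := (mem_gammaIJ_iff I J _).1 hx
    obtain ⟨m, hm, h2⟩ := (mem_gammaIJ_iff I' J _).1 x.2
    rw [torsionOf_subtype] at h1
    refine (mem_gammaIJ_iff _ J _).2 ⟨n + m, by omega, ?_⟩
    rw [Submodule.add_eq_sup]
    exact le_trans Ideal.sup_pow_add_le_pow_sup_pow (sup_le h1 h2)
  · intro hf
    obtain ⟨k, hk, h⟩ := (mem_gammaIJ_iff _ J _).1 hf
    rw [Submodule.add_eq_sup] at h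
    have hI : I ^ k ≤ Ideal.torsionOf R _ f ⊔ J :=
      le_trans (pow_le_pow_left' le_sup_left k) h
    have hI' : I' ^ k ≤ Ideal.torsionOf R _ f ⊔ J :=
      le_trans (pow_le_pow_left' le_sup_right k) h
    have hfS : f ∈ gammaIJ I' J (M →ₗ[R] N) := (mem_gammaIJ_iff I' J _).2 ⟨k, hk, hI'⟩
    refine ⟨⟨f, hfS⟩, (mem_gammaIJ_iff I J _).2 ⟨k, hk, ?_⟩, rfl⟩
    rwa [torsionOf_subtype]
end

section
/- Let R be a commutative noetherian ring and I, J ideals of R. If E is an injective R-module, then the (I,J)-torsion submodule Γ_{I,J}(E) is an injective R-module. -/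
open CategoryTheory

/-!
By Baer's criterion it suffices to extend a map `f : a → Γ_{I,J}(E)` from an ideal `a`
to `R`. The image of `f` is finitely generated, so its annihilator `K` satisfies `I^n ⊆ K + J`
for some `n`. Artin–Rees gives `a ∩ K^c ⊆ K a`, on which `f` vanishes; hence `f` extends by
zero to `a + K^c`, and then, `E` being injective, to `R`. The extension is `r ↦ r • e` with
`K^c e = 0`, so `I^{n(c+1)} ⊆ (K + J)^{c+1} ⊆ K^c + J ⊆ ann(e) + J` and `e` lies in `Γ_{I,J}(E)`.
-/

open Submodule LinearMap

lemma Ideal.pow_add_le_inf_sup {R : Type*} [CommSemiring R] {I J A B : Ideal R} {n m : ℕ}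
    (hA : I ^ n ≤ A ⊔ J) (hB : I ^ m ≤ B ⊔ J) : I ^ (n + m) ≤ A ⊓ B ⊔ J := by
  rw [pow_add]
  refine (Ideal.mul_mono hA hB).trans ?_
  rw [Ideal.sup_mul, Ideal.mul_sup]
  exact sup_le (sup_le (le_sup_of_le_left Ideal.mul_le_inf) (le_sup_of_le_right Ideal.mul_le_right))
    (le_sup_of_le_right Ideal.mul_le_left)

lemma Ideal.exists_inf_pow_le_mul {R : Type*} [CommRing R] [IsNoetherianRing R] (a K : Ideal R) :
    ∃ c, a ⊓ K ^ c ≤ K * a := by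
  obtain ⟨k, hk⟩ := Ideal.exists_pow_inf_eq_pow_smul K a
  refine ⟨k + 1, ?_⟩
  have hAR := hk (k + 1) k.le_succ
  simp only [smul_eq_mul, Ideal.mul_top, Nat.add_sub_cancel_left, pow_one] at hAR
  rw [inf_comm, hAR]
  exact Ideal.mul_mono_right inf_le_right

lemma LinearMap.map_eq_zero_of_mem_mul {R M : Type*} [CommSemiring R] [AddCommMonoid M]
    [Module R M] {a K : Ideal R} (f : a →ₗ[R] M) (hK : K ≤ (range f).annihilator) (x : a)
    (hx : (x : R) ∈ K * a) : f x = 0 := by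
  have hker : K • (⊤ : Submodule R a) ≤ ker f := smul_le.2 fun r hr y _ => by
    rw [mem_ker, map_smul]
    exact mem_annihilator.1 (hK hr) _ ⟨y, rfl⟩
  have hKa : K * a = map a.subtype (K • ⊤) := by
    rw [map_smul'', Submodule.map_top, range_subtype, smul_eq_mul]
  obtain ⟨y, hy, hyx⟩ := hKa ▸ hx
  exact Subtype.ext hyx ▸ hker hy

section Baer

variable {R M : Type*} [CommRing R] [AddCommGroup M] [Module R M]

lemma Module.Baer.exists_smul_eq_and_smul_eq_zero (hM : Module.Baer R M) {a : Ideal R}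
    (f : a →ₗ[R] M) (b : Ideal R) (hf : ∀ x : a, (x : R) ∈ b → f x = 0) :
    ∃ e : M, (∀ x : a, (x : R) • e = f x) ∧ ∀ y ∈ b, y • e = 0 := by
  let g : R →ₗ.[R] M := LinearPMap.sup ⟨a, f⟩ ⟨b, 0⟩ fun x y hxy => hf x (hxy ▸ y.2)
  obtain ⟨g', hg'⟩ := hM (a ⊔ b) g.toFun
  have hsmul (r : R) : r • g' 1 = g' r := by rw [← map_smul, smul_eq_mul, mul_one]
  refine ⟨g' 1, fun x => ?_, fun y hy => ?_⟩
  · rw [hsmul, hg' x (le_sup_left (a := a) x.2)]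
    exact ((LinearPMap.left_le_sup _ _ _).2 rfl).symm
  · rw [hsmul, hg' y (le_sup_right (b := b) hy)]
    exact ((LinearPMap.right_le_sup _ _ _).2 (x := ⟨y, hy⟩) rfl).symm

theorem Module.Baer.exists_smul_eq_and_pow_le_torsionOf [IsNoetherianRing R]
    (hM : Module.Baer R M) {a K : Ideal R} (f : a →ₗ[R] M) (hK : K ≤ (range f).annihilator) :
    ∃ e : M, (∀ x : a, (x : R) • e = f x) ∧ ∃ c, K ^ c ≤ Ideal.torsionOf R M e := by
  obtain ⟨c, hc⟩ := Ideal.exists_inf_pow_le_mul a K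
  obtain ⟨e, he, hKe⟩ := hM.exists_smul_eq_and_smul_eq_zero f (K ^ c)
    fun x hx => f.map_eq_zero_of_mem_mul hK x (hc ⟨x.2, hx⟩)
  exact ⟨e, he, c, hKe⟩

end Baer

section

variable {R : Type} [CommRing R] {M : Type} [AddCommGroup M] [Module R M] {I J : Ideal R}

lemma mem_gammaIJ_iff_exists_pow_le {x : M} :
    x ∈ gammaIJ I J M ↔ ∃ n, I ^ n ≤ Ideal.torsionOf R M x ⊔ J := by
  constructor
  · rintro ⟨n, -, hn⟩
    exact ⟨n, (gammaIJ_aux I J x n).1 hn⟩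
  · rintro ⟨n, hn⟩
    exact ⟨n + 1, n.succ_pos,
      (gammaIJ_aux I J x _).2 ((Ideal.pow_le_pow_right n.le_succ).trans hn)⟩

lemma mem_gammaIJ_of_pow_le_torsionOf {x : M} {K : Ideal R} {n c : ℕ} (hI : I ^ n ≤ K ⊔ J)
    (hK : K ^ c ≤ Ideal.torsionOf R M x) : x ∈ gammaIJ I J M := by
  refine mem_gammaIJ_iff_exists_pow_le.2 ⟨n * (c + 1), ?_⟩
  calc I ^ (n * (c + 1)) = (I ^ n) ^ (c + 1) := pow_mul I n (c + 1)
    _ ≤ (K ⊔ J) ^ (c + 1) := Ideal.pow_right_mono hI _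
    _ ≤ K ^ c ⊔ J ^ 1 := Ideal.sup_pow_add_le_pow_sup_pow
    _ ≤ Ideal.torsionOf R M x ⊔ J := by rw [pow_one]; exact sup_le_sup_right hK J

lemma exists_pow_le_annihilator_sup_of_fg {N : Submodule R M} (hN : N.FG)
    (hle : N ≤ gammaIJ I J M) : ∃ n, I ^ n ≤ N.annihilator ⊔ J := by
  induction N, hN using Submodule.fg_induction with
  | singleton x =>
    rw [Ideal.annihilator_span_singleton_eq_torsionOf]
    exact mem_gammaIJ_iff_exists_pow_le.1 (hle (mem_span_singleton_self x))
  | sup N₁ N₂ _ _ ih₁ ih₂ =>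
    obtain ⟨n₁, h₁⟩ := ih₁ (le_sup_left.trans hle)
    obtain ⟨n₂, h₂⟩ := ih₂ (le_sup_right.trans hle)
    exact ⟨n₁ + n₂, annihilator_sup N₁ N₂ ▸ Ideal.pow_add_le_inf_sup h₁ h₂⟩

end

/-- Lemma 2.5: if `E` is an injective `R`-module then so is `Γ_{I,J}(E)`. -/
theorem gammaIJ_injective (R : Type) [CommRing R] [IsNoetherianRing R] (I J : Ideal R)
    (E : Type) [AddCommGroup E] [Module R E] (hE : Module.Injective R E) :
    Module.Injective R ↥(gammaIJ I J E) := by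
  refine Module.Baer.injective fun a f => ?_
  let F := (gammaIJ I J E).subtype ∘ₗ f
  have hFΓ : range F ≤ gammaIJ I J E := by
    rintro _ ⟨x, rfl⟩
    exact (f x).2
  obtain ⟨n, hn⟩ := exists_pow_le_annihilator_sup_of_fg
    (range_eq_map F ▸ (IsNoetherian.noetherian ⊤).map F) hFΓ
  obtain ⟨e, he, c, hc⟩ :=
    (Module.Baer.of_injective hE).exists_smul_eq_and_pow_le_torsionOf F le_rfl
  exact ⟨toSpanSingleton R _ ⟨e, mem_gammaIJ_of_pow_le_torsionOf hn hc⟩,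
    fun x hx => Subtype.ext (he ⟨x, hx⟩)⟩
end
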